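/- arXiv:2504.16804 — 4 statements merged into one kernel-verified Lean document; each statement's English description precedes it below -/
import Mathlib

section
/- Assume 0 < r_f < 1. For every α ∈ ℝ, the discriminant of the quadratic equation c² − 2(G(α) − 2r_f²)·c + (G(α)² − 4r_f²·W(α)) = 0 in the unknown c, namely Δ = 4(G(α) − 2r_f²)² − 4(G(α)² − 4r_f²·W(α)), equals 32·μ·r_f, and in particular Δ > 0, so the quadratic has two distinct real roots. -/
/-- The function W(α). -/
noncomputable def Wfun (μ rf α : ℝ) : ℝ :=
  (rf * Real.cos α + 1 - μ) ^ 2 + (rf * Real.sin α) ^ 2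
    + 2 * (1 - μ) / Real.sqrt (1 + 2 * rf * Real.cos α + rf ^ 2)
    + 2 * μ / rf + μ * (1 - μ)

/-- The function G(α). -/
noncomputable def Gfun (μ rf α : ℝ) : ℝ :=
  2 * rf ^ 2 + 2 * (1 - μ) * (rf * Real.cos α + 1 - μ)
    + (1 - μ) * (2 * μ - 1)
    + 2 * (1 - μ) / Real.sqrt (1 + 2 * rf * Real.cos α + rf ^ 2)

theorem discriminant_eq_and_pos
    (μ rf : ℝ) (hμ0 : 0 < μ) (hμ1 : μ < 1) (hrf0 : 0 < rf) (hrf1 : rf < 1) (α : ℝ) :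
    -- the discriminant Δ of c² − 2(G(α) − 2rf²)c + (G(α)² − 4rf²W(α)) = 0
    4 * (Gfun μ rf α - 2 * rf ^ 2) ^ 2
        - 4 * ((Gfun μ rf α) ^ 2 - 4 * rf ^ 2 * Wfun μ rf α) = 32 * μ * rf
    ∧ 0 < 4 * (Gfun μ rf α - 2 * rf ^ 2) ^ 2
        - 4 * ((Gfun μ rf α) ^ 2 - 4 * rf ^ 2 * Wfun μ rf α)
    ∧ -- the quadratic has two distinct real roots
      ∃ c₁ c₂ : ℝ, c₁ ≠ c₂
        ∧ c₁ ^ 2 - 2 * (Gfun μ rf α - 2 * rf ^ 2) * c₁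
            + ((Gfun μ rf α) ^ 2 - 4 * rf ^ 2 * Wfun μ rf α) = 0
        ∧ c₂ ^ 2 - 2 * (Gfun μ rf α - 2 * rf ^ 2) * c₂
            + ((Gfun μ rf α) ^ 2 - 4 * rf ^ 2 * Wfun μ rf α) = 0 := by
  have hrf' : rf ≠ 0 := ne_of_gt hrf0
  have h1 : Real.sin α ^ 2 + Real.cos α ^ 2 = 1 := Real.sin_sq_add_cos_sq α
  have hΔ : 4 * (Gfun μ rf α - 2 * rf ^ 2) ^ 2
        - 4 * ((Gfun μ rf α) ^ 2 - 4 * rf ^ 2 * Wfun μ rf α) = 32 * μ * rf := by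
    unfold Wfun Gfun
    set t := 2 * (1 - μ) / Real.sqrt (1 + 2 * rf * Real.cos α + rf ^ 2) with ht
    field_simp
    linear_combination (16 * rf ^ 4) * h1
  refine ⟨hΔ, by rw [hΔ]; positivity, ?_⟩
  set b := Gfun μ rf α - 2 * rf ^ 2 with hb
  set q := (Gfun μ rf α) ^ 2 - 4 * rf ^ 2 * Wfun μ rf α with hq
  have h8 : (0:ℝ) < 8 * μ * rf := by positivity
  set d := Real.sqrt (8 * μ * rf) with hd
  have hd2 : d ^ 2 = 8 * μ * rf := Real.sq_sqrt h8.le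
  have hd0 : 0 < d := Real.sqrt_pos.mpr h8
  refine ⟨b + d, b - d, by nlinarith, ?_, ?_⟩
  · linear_combination hd2 - (1/4) * hΔ
  · linear_combination hd2 - (1/4) * hΔ
end

section
/- Assume 0 < r_f < 1 and r_f³ ≤ 2μ. For every α ∈ ℝ, the number C_D*(α) = G(α) − 2r_f² + 2√(2μ·r_f) satisfies the quadratic equation c² − 2(G(α) − 2r_f²)·c + (G(α)² − 4r_f²·W(α)) = 0 together with the inequality c ≥ G(α), and it is the unique real number with both properties. -/
/-- Critical Jacobi energy for direct insertion. -/
noncomputable def CDstar (μ rf α : ℝ) : ℝ :=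
  Gfun μ rf α - 2 * rf ^ 2 + 2 * Real.sqrt (2 * μ * rf)

theorem eq_add_of_sub_sq_eq_sq {b s g c : ℝ} (hlow : b - s < g) (hg : g ≤ c)
    (h : (c - b) ^ 2 = s ^ 2) : c = b + s := by
  rcases sq_eq_sq_iff_eq_or_eq_neg.mp h with h | h <;> linarith

theorem Wfun_eq_Gfun_sub_sq_add (μ rf α : ℝ) :
    Wfun μ rf α = Gfun μ rf α - rf ^ 2 + 2 * μ / rf := by
  unfold Wfun Gfun
  linear_combination rf ^ 2 * Real.sin_sq_add_cos_sq α

theorem quadratic_eq_sq_sub_sq {μ rf : ℝ} (hμ : 0 ≤ μ) (hrf : 0 < rf) (α c : ℝ) :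
    c ^ 2 - 2 * (Gfun μ rf α - 2 * rf ^ 2) * c + ((Gfun μ rf α) ^ 2 - 4 * rf ^ 2 * Wfun μ rf α)
      = (c - (Gfun μ rf α - 2 * rf ^ 2)) ^ 2 - (2 * Real.sqrt (2 * μ * rf)) ^ 2 := by
  have hsqrt : Real.sqrt (2 * μ * rf) ^ 2 = 2 * μ * rf := Real.sq_sqrt (by positivity)
  have hcancel : rf ^ 2 * (2 * μ / rf) = 2 * μ * rf := by field_simp
  rw [Wfun_eq_Gfun_sub_sq_add]
  linear_combination 4 * hsqrt - 4 * hcancel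

theorem sq_le_sqrt_two_mul_mul {μ rf : ℝ} (hrf : 0 ≤ rf) (hrf3 : rf ^ 3 ≤ 2 * μ) :
    rf ^ 2 ≤ Real.sqrt (2 * μ * rf) := by
  refine Real.le_sqrt_of_sq_le ?_
  nlinarith

theorem CDstar_root_of_quadratic_and_unique_general
    (μ rf : ℝ) (hμ0 : 0 < μ) (hrf0 : 0 < rf)
    (hrf3 : rf ^ 3 ≤ 2 * μ) (α : ℝ) :
    ((CDstar μ rf α) ^ 2 - 2 * (Gfun μ rf α - 2 * rf ^ 2) * CDstar μ rf α
        + ((Gfun μ rf α) ^ 2 - 4 * rf ^ 2 * Wfun μ rf α) = 0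
      ∧ CDstar μ rf α ≥ Gfun μ rf α)
    ∧ ∀ c : ℝ,
        (c ^ 2 - 2 * (Gfun μ rf α - 2 * rf ^ 2) * c
            + ((Gfun μ rf α) ^ 2 - 4 * rf ^ 2 * Wfun μ rf α) = 0
          ∧ c ≥ Gfun μ rf α) → c = CDstar μ rf α := by
  have hquad := quadratic_eq_sq_sub_sq hμ0.le hrf0 α
  have hsq_le := sq_le_sqrt_two_mul_mul hrf0.le hrf3
  refine ⟨⟨by rw [hquad, CDstar]; ring, by unfold CDstar; linarith⟩, ?_⟩
  rintro c ⟨hc, hcG⟩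
  rw [hquad, sub_eq_zero] at hc
  refine eq_add_of_sub_sq_eq_sq ?_ hcG hc
  have hrf2 : 0 < rf ^ 2 := by positivity
  linarith [Real.sqrt_nonneg (2 * μ * rf)]

theorem CDstar_root_of_quadratic_and_unique
    (μ rf : ℝ) (hμ0 : 0 < μ) (hμ1 : μ < 1) (hrf0 : 0 < rf) (hrf1 : rf < 1)
    (hrf3 : rf ^ 3 ≤ 2 * μ) (α : ℝ) :
    ((CDstar μ rf α) ^ 2 - 2 * (Gfun μ rf α - 2 * rf ^ 2) * CDstar μ rf α
        + ((Gfun μ rf α) ^ 2 - 4 * rf ^ 2 * Wfun μ rf α) = 0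
      ∧ CDstar μ rf α ≥ Gfun μ rf α)
    ∧ ∀ c : ℝ,
        (c ^ 2 - 2 * (Gfun μ rf α - 2 * rf ^ 2) * c
            + ((Gfun μ rf α) ^ 2 - 4 * rf ^ 2 * Wfun μ rf α) = 0
          ∧ c ≥ Gfun μ rf α) → c = CDstar μ rf α :=
  CDstar_root_of_quadratic_and_unique_general μ rf hμ0 hrf0 hrf3 α
end

section
/- Assume 0 < r_f < 1 and r_f³ ≤ 2μ. For every α ∈ ℝ, the critical Jacobi energy for direct insertion C_D*(α) = G(α) − 2r_f² + 2√(2μ·r_f) satisfies W(α) − C_D*(α) = (√(2μ/r_f) − r_f)² ≥ 0 and solves the fixed-point equation C_D*(α) = G(α) + 2r_f·√(W(α) − C_D*(α)). -/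
theorem CDstar_fixed_point_equation
    (μ rf : ℝ) (hμ0 : 0 < μ) (hμ1 : μ < 1) (hrf0 : 0 < rf) (hrf1 : rf < 1)
    (hrf3 : rf ^ 3 ≤ 2 * μ) (α : ℝ) :
    Wfun μ rf α - CDstar μ rf α = (Real.sqrt (2 * μ / rf) - rf) ^ 2
    ∧ 0 ≤ Wfun μ rf α - CDstar μ rf α
    ∧ CDstar μ rf α
        = Gfun μ rf α + 2 * rf * Real.sqrt (Wfun μ rf α - CDstar μ rf α) := by
  set s := Real.sqrt (2 * μ / rf) with hs
  have hs2 : s ^ 2 = 2 * μ / rf := Real.sq_sqrt (by positivity)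
  have hsrf : Real.sqrt (2 * μ * rf) = rf * s := by
    rw [show 2 * μ * rf = (rf * s) ^ 2 by
      rw [mul_pow, hs2]; field_simp]
    exact Real.sqrt_sq (by positivity)
  have h1 : rf ^ 2 ≤ 2 * μ / rf := by
    rw [le_div_iff₀ hrf0]; nlinarith
  have hrs : rf ≤ s := by
    nlinarith [Real.sqrt_nonneg (2 * μ / rf), hs2]
  have key : Wfun μ rf α - CDstar μ rf α = (s - rf) ^ 2 := by
    simp only [Wfun, CDstar, Gfun, hsrf]
    have hsin := Real.sin_sq_add_cos_sq α
    linear_combination rf ^ 2 * hsin - hs2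
  refine ⟨key, by rw [key]; positivity, ?_⟩
  rw [key, Real.sqrt_sq (by linarith)]
  simp only [CDstar, hsrf]
  ring
end

section
/- Assume 0 < r_f < 1 and 0 < μ < 1. For α ∈ [0, 2π], the expression f(α) = −2(1−μ)·r_f·sin α + 2(1−μ)·r_f·sin α / (1 + 2r_f·cos α + r_f²)^{3/2} (the derivative of the critical Jacobi energy C_D*(α) with respect to α) vanishes if and only if α ∈ {0, arccos(−r_f/2), π, 2π − arccos(−r_f/2), 2π}. -/
set_option maxHeartbeats 1000000 in

theorem derivative_zeros_on_Icc
    (μ rf : ℝ) (hμ0 : 0 < μ) (hμ1 : μ < 1) (hrf0 : 0 < rf) (hrf1 : rf < 1)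
    (α : ℝ) (hα : α ∈ Set.Icc (0 : ℝ) (2 * Real.pi)) :
    (-2 * (1 - μ) * rf * Real.sin α
        + 2 * (1 - μ) * rf * Real.sin α
            / (1 + 2 * rf * Real.cos α + rf ^ 2) ^ ((3 : ℝ) / 2) = 0)
    ↔ α ∈ ({0, Real.arccos (-rf / 2), Real.pi,
            2 * Real.pi - Real.arccos (-rf / 2), 2 * Real.pi} : Set ℝ) := by
  obtain ⟨hα0, hα2⟩ := hα
  have hπ := Real.pi_pos
  set D : ℝ := 1 + 2 * rf * Real.cos α + rf ^ 2 with hDdef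
  have hcos1 := Real.neg_one_le_cos α
  have hDpos : 0 < D := by nlinarith [sq_nonneg (1 - rf)]
  have hR : (0:ℝ) < D ^ ((3:ℝ)/2) := Real.rpow_pos_of_pos hDpos _
  have hc : (0:ℝ) < 2 * (1 - μ) * rf := by nlinarith
  have hE1 : D ^ ((3:ℝ)/2) = 1 ↔ D = 1 := by
    constructor
    · intro h
      have hinj := Real.rpow_left_injOn (x := (3:ℝ)/2) (by norm_num)
      exact hinj (le_of_lt hDpos : D ∈ {y : ℝ | 0 ≤ y}) (by norm_num)
        (by show D ^ ((3:ℝ)/2) = (1:ℝ) ^ ((3:ℝ)/2); rw [h, Real.one_rpow])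
    · intro h; rw [h, Real.one_rpow]
  -- Step 1: equation ↔ sin α = 0 ∨ D = 1
  have key : (-2 * (1 - μ) * rf * Real.sin α
        + 2 * (1 - μ) * rf * Real.sin α / D ^ ((3:ℝ)/2) = 0)
      ↔ (Real.sin α = 0 ∨ D = 1) := by
    constructor
    · intro h
      have h2 : 2 * (1 - μ) * rf * Real.sin α * (1 - D ^ ((3:ℝ)/2)) = 0 := by
        field_simp at h
        linear_combination h
      rcases mul_eq_zero.1 h2 with h3 | h3
      · rcases mul_eq_zero.1 h3 with h4 | h4
        · exact absurd h4 (ne_of_gt hc)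
        · exact Or.inl h4
      · right; exact hE1.1 (by linarith)
    · rintro (h | h)
      · rw [h]; ring
      · rw [hE1.2 h]; field_simp; ring
  rw [key]
  -- Step 2: D = 1 ↔ cos α = -rf/2
  have hDiff : D = 1 ↔ Real.cos α = -rf / 2 := by
    constructor
    · intro h
      have h2 : rf * (2 * Real.cos α + rf) = 0 := by linear_combination h
      rcases mul_eq_zero.1 h2 with h3 | h3
      · exact absurd h3 (ne_of_gt hrf0)
      · linarith
    · intro h; rw [hDdef, h]; ring
  -- Step 3: sin α = 0 ↔ α ∈ {0, π, 2π}
  have hsin : Real.sin α = 0 ↔ (α = 0 ∨ α = Real.pi ∨ α = 2 * Real.pi) := by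
    constructor
    · intro h
      obtain ⟨n, hn⟩ := Real.sin_eq_zero_iff.1 h
      have hn0 : 0 ≤ n := by
        by_contra hcon
        push_neg at hcon
        have h1 : (n:ℝ) ≤ -1 := by exact_mod_cast (by omega : n ≤ -1)
        nlinarith
      have hn2 : n ≤ 2 := by
        by_contra hcon
        push_neg at hcon
        have h1 : (3:ℝ) ≤ (n:ℝ) := by exact_mod_cast (by omega : (3:ℤ) ≤ n)
        nlinarith
      interval_cases n
      · left; push_cast at hn; linarith
      · right; left; push_cast at hn; linarith
      · right; right; push_cast at hn; linarith
    · rintro (h | h | h) <;> simp [h, Real.sin_two_pi]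
  -- Step 4: cos α = -rf/2 ↔ α = arccos(-rf/2) ∨ α = 2π - arccos(-rf/2)
  have hb1 : (-1:ℝ) ≤ -rf / 2 := by linarith
  have hb2 : -rf / 2 ≤ (1:ℝ) := by linarith
  have hcosiff : Real.cos α = -rf / 2 ↔
      (α = Real.arccos (-rf / 2) ∨ α = 2 * Real.pi - Real.arccos (-rf / 2)) := by
    constructor
    · intro h
      by_cases hle : α ≤ Real.pi
      · left
        have h1 := Real.arccos_cos hα0 hle
        rw [h] at h1
        exact h1.symm
      · right
        push_neg at hle
        have hcb : Real.cos (2 * Real.pi - α) = Real.cos α := by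
          rw [Real.cos_sub]; simp
        have harcc := Real.arccos_cos (by linarith : (0:ℝ) ≤ 2 * Real.pi - α)
          (by linarith : 2 * Real.pi - α ≤ Real.pi)
        rw [hcb, h] at harcc
        linarith
    · rintro (h | h)
      · rw [h, Real.cos_arccos hb1 hb2]
      · rw [h]
        have h1 : Real.cos (2 * Real.pi - Real.arccos (-rf / 2))
            = Real.cos (Real.arccos (-rf / 2)) := by
          rw [Real.cos_sub]; simp
        rw [h1, Real.cos_arccos hb1 hb2]
  simp only [Set.mem_insert_iff, Set.mem_singleton_iff]
  rw [hsin, hDiff, hcosiff]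
  tauto
end
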